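/- If t →S_top t' for top-level ucbv reduction with S = fv(t), then there exists a term t'' such that ·*(t) →db t'' in lcbv, i.e. the partial unfolding of t under the empty value assignment has a db-redex. -/
import Mathlib


/-! ## Terms of the call-by-value lambda-calculus with explicit substitutions -/

inductive Term : Type
  | var : ℕ → Term
  | lam : ℕ → Term → Term
  | app : Term → Term → Term
  | es  : Term → ℕ → Term → Term
deriving DecidableEq

namespace Term

/-- Free variables. -/
def fv : Term → Finset ℕ
  | var x => {x}
  | lam x t => t.fv.erase x
  | app t u => t.fv ∪ u.fv
  | es t x u => t.fv.erase x ∪ u.fv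

/-- Reachable variables. -/
def rv : Term → Finset ℕ
  | var x => {x}
  | lam _ _ => ∅
  | app t u => t.rv ∪ u.rv
  | es t x u => t.rv.erase x ∪ u.rv

/-- Values: variables and abstractions. -/
inductive Value : Term → Prop
  | var (x : ℕ) : Value (var x)
  | lam (x : ℕ) (t : Term) : Value (lam x t)

end Term

/-- Substitution contexts `L ::= ◇ | L[x\t]`, represented as a list of
explicit substitutions, innermost first. -/
abbrev SubCtx := List (ℕ × Term)

/-- Plugging a term in the hole of a substitution context. -/
def plug (t : Term) : SubCtx → Term
  | [] => t
  | (x, u) :: L => plug (Term.es t x u) L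

/-- Step kinds: `db`, `lsv`, and `[x\v]`. -/
inductive Kind : Type
  | db : Kind
  | lsv : Kind
  | sub : ℕ → Term → Kind

/-- Free variables of a step kind. -/
def Kind.fv : Kind → Finset ℕ
  | db => ∅
  | lsv => ∅
  | sub x v => insert x v.fv

/-! ## The linear CBV strategy (lcbv) -/

inductive LStep : Kind → Term → Term → Prop
  | db (x : ℕ) (t : Term) (L : SubCtx) (u : Term) :
      LStep .db (.app (plug (.lam x t) L) u) (plug (.es t x u) L)
  | sub (x : ℕ) (v : Term) : v.Value → x ∉ v.fv →
      LStep (.sub x v) (.var x) v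
  | lsv {t t' : Term} (x : ℕ) (v : Term) (L : SubCtx) :
      LStep (.sub x v) t t' →
      LStep .lsv (.es t x (plug v L)) (plug (.es t' x v) L)
  | appL {ρ t t'} (u) : LStep ρ t t' → LStep ρ (.app t u) (.app t' u)
  | appR {ρ u u'} (t) : LStep ρ u u' → LStep ρ (.app t u) (.app t u')
  | esL {ρ t t'} (x u) : x ∉ ρ.fv → LStep ρ t t' →
      LStep ρ (.es t x u) (.es t' x u)
  | esR {ρ u u'} (t x) : LStep ρ u u' → LStep ρ (.es t x u) (.es t x u')

/-- Top-level lcbv reduction `→Vtop := →db ∪ →lsv`. -/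
def LTop (t u : Term) : Prop := LStep .db t u ∨ LStep .lsv t u

/-! ## Hereditary abstractions and structures -/

inductive HAbs : Finset ℕ → Term → Prop
  | lam (A : Finset ℕ) (x t) : HAbs A (.lam x t)
  | var {A : Finset ℕ} {x} : x ∈ A → HAbs A (.var x)
  | sub1 {A t} (x u) : HAbs A t → x ∉ A → HAbs A (.es t x u)
  | sub2 {A t x u} : HAbs (insert x A) t → x ∉ A → HAbs A u →
      HAbs A (.es t x u)

inductive Struct : Finset ℕ → Term → Prop
  | var {S : Finset ℕ} {x} : x ∈ S → Struct S (.var x)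
  | app {S t} (u) : Struct S t → Struct S (.app t u)
  | sub1 {S t} (x u) : Struct S t → x ∉ S → Struct S (.es t x u)
  | sub2 {S t x u} : Struct (insert x S) t → x ∉ S → Struct S u →
      Struct S (.es t x u)

/-- Positional flags: applied `@` (`ap`) and non-applied `¬@` (`nap`). -/
inductive PFlag : Type
  | ap : PFlag
  | nap : PFlag
deriving DecidableEq

/-! ## The useful CBV strategy (ucbv) -/

inductive UStep : Kind → Finset ℕ → Finset ℕ → PFlag → Term → Term → Prop
  | db {A S μ} (x t L u) :
      UStep .db A S μ (.app (plug (.lam x t) L) u) (plug (.es t x u) L)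
  | sub {A S : Finset ℕ} {x v} : x ∈ A → v.Value → x ∉ v.fv →
      UStep (.sub x v) A S .ap (.var x) v
  | lsv {A S μ t t' x v} (L) :
      UStep (.sub x v) (insert x A) S μ t t' →
      x ∉ A ∪ S → HAbs A (plug v L) →
      UStep .lsv A S μ (.es t x (plug v L)) (plug (.es t' x v) L)
  | appL {ρ A S μ t t'} (u) :
      UStep ρ A S .ap t t' → UStep ρ A S μ (.app t u) (.app t' u)
  | appR {ρ A S μ t u u'} :
      Struct S t → UStep ρ A S .nap u u' →
      UStep ρ A S μ (.app t u) (.app t u')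
  | esR {ρ A S μ u u'} (t x) :
      UStep ρ A S .nap u u' → UStep ρ A S μ (.es t x u) (.es t x u')
  | esLA {ρ A S μ t t' x u} :
      UStep ρ (insert x A) S μ t t' → HAbs A u → x ∉ A ∪ S → x ∉ ρ.fv →
      UStep ρ A S μ (.es t x u) (.es t' x u)
  | esLS {ρ A S μ t t' x u} :
      UStep ρ A (insert x S) μ t t' → Struct S u → x ∉ A ∪ S → x ∉ ρ.fv →
      UStep ρ A S μ (.es t x u) (.es t' x u)

/-- Inductive characterisation of ucbv normal forms. -/
inductive NF : Finset ℕ → Finset ℕ → PFlag → Term → Prop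
  | var {A S : Finset ℕ} {μ x} : (x ∈ A → μ = .nap) → NF A S μ (.var x)
  | lam {A S : Finset ℕ} (x t) : NF A S .nap (.lam x t)
  | app {A S μ t u} : NF A S .ap t → NF A S .nap u → NF A S μ (.app t u)
  | esA {A S μ t x u} : NF (insert x A) S μ t → NF A S .nap u → HAbs A u →
      NF A S μ (.es t x u)
  | esS {A S μ t x u} : NF A (insert x S) μ t → NF A S .nap u → Struct S u →
      NF A S μ (.es t x u)

/-- Correctness of the frames `(A, S)` for `t`: `inv(A,S,t)`. -/
def Correct (A S : Finset ℕ) (t : Term) : Prop :=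
  A ∩ S = ∅ ∧ t.fv ⊆ A ∪ S

/-- Top-level ucbv reduction `→S_top := →db[∅,S,¬@] ∪ →lsv[∅,S,¬@]`. -/
def UTop (S : Finset ℕ) (t u : Term) : Prop :=
  UStep .db ∅ S .nap t u ∨ UStep .lsv ∅ S .nap t u

/-- Top-level ucbv reduction sequences counting `m` db-steps and `e` lsv-steps. -/
inductive UTopSeq (S : Finset ℕ) : Term → Term → ℕ → ℕ → Prop
  | refl (t) : UTopSeq S t t 0 0
  | db {t t' u m e} : UStep .db ∅ S .nap t t' → UTopSeq S t' u m e →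
      UTopSeq S t u (m + 1) e
  | lsv {t t' u m e} : UStep .lsv ∅ S .nap t t' → UTopSeq S t' u m e →
      UTopSeq S t u m (e + 1)

/-! ## Partial unfolding under a value assignment.

A value assignment is represented as a function `ℕ → Option Term`
(the empty assignment maps every variable to `none`). -/

/-- Split a term of the form `vL` (a value under a substitution context) into
the value and the context; returns `none` if the head is an application. -/
def split : Term → Option (Term × SubCtx)
  | .var x => some (.var x, [])
  | .lam x t => some (.lam x t, [])
  | .app _ _ => none
  | .es t x u => (split t).map fun p => (p.1, p.2 ++ [(x, u)])

/-- Partial unfolding `σ*(t)` of a term `t` under a value assignment `σ`. -/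
def unfold : (ℕ → Option Term) → Term → Term
  | σ, .var x => (σ x).getD (.var x)
  | _, .lam x t => .lam x t
  | σ, .app t u => .app (unfold σ t) (unfold σ u)
  | σ, .es t x u =>
    match split (unfold σ u) with
    | some (v, L) =>
        if x ∈ t.rv then
          plug (.es (unfold (Function.update σ x (some v)) t) x v) L
        else .es (unfold σ t) x (unfold σ u)
    | none => .es (unfold σ t) x (unfold σ u)

/-- Partial unfolding `·*(t)` under the empty value assignment. -/
def unfold₀ (t : Term) : Term := unfold (fun _ => none) t


namespace Aux

theorem plug_append (a : Term) (L₁ L₂ : SubCtx) :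
    plug a (L₁ ++ L₂) = plug (plug a L₁) L₂ := by
  induction L₁ generalizing a with
  | nil => rfl
  | cons p L ih => cases p; simp [plug, ih]

theorem split_plug (a : Term) (L : SubCtx) :
    split (plug a L) = (split a).map (fun p => (p.1, p.2 ++ L)) := by
  induction L generalizing a with
  | nil => cases h : split a <;> simp [plug, h]
  | cons p L ih =>
    cases p with
    | mk x u =>
      show split (plug (.es a x u) L) = _
      rw [ih]
      cases h : split a <;> simp [split, h]

theorem split_eq_plug : ∀ {a v L}, split a = some (v, L) → a = plug v L := by
  intro a
  induction a with
  | var x => intro v L h; simp [split] at h; obtain ⟨rfl, rfl⟩ := h; rfl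
  | lam x t => intro v L h; simp [split] at h; obtain ⟨rfl, rfl⟩ := h; rfl
  | app t u _ _ => intro v L h; simp [split] at h
  | es t x u ih _ =>
    intro v L h
    simp only [split, Option.map_eq_some_iff] at h
    obtain ⟨⟨v', L'⟩, hp, he⟩ := h
    cases he
    rw [plug_append]
    simp [plug, ← ih hp]

theorem split_value : ∀ {a v L}, split a = some (v, L) → v.Value := by
  intro a
  induction a with
  | var x => intro v L h; simp [split] at h; obtain ⟨rfl, rfl⟩ := h; exact .var x
  | lam x t => intro v L h; simp [split] at h; obtain ⟨rfl, rfl⟩ := h; exact .lam x t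
  | app t u _ _ => intro v L h; simp [split] at h
  | es t x u ih _ =>
    intro v L h
    simp only [split, Option.map_eq_some_iff] at h
    obtain ⟨⟨v', L'⟩, hp, he⟩ := h
    cases he
    exact ih hp

theorem step_plug {a b : Term} (h : LStep .db a b) :
    ∀ L, LStep .db (plug a L) (plug b L) := by
  intro L
  induction L generalizing a b with
  | nil => exact h
  | cons p L ih =>
    cases p with
    | mk x u => exact ih (LStep.esL x u (Finset.notMem_empty x) h)

theorem value_no_db {v b : Term} (hv : v.Value) (h : LStep .db v b) : False := by
  cases hv <;> cases h

theorem plug_decomp : ∀ {L : SubCtx} {a w : Term}, LStep .db (plug a L) w →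
    (∃ b, LStep .db a b) ∨ (∀ c, ∃ w', LStep .db (plug c L) w') := by
  intro L
  induction L with
  | nil => intro a w h; exact Or.inl ⟨w, h⟩
  | cons p L ih =>
    cases p with
    | mk x u =>
      intro a w h
      rcases ih h with h' | h'
      · obtain ⟨b, hb⟩ := h'
        cases hb with
        | esL _ _ _ hs => exact Or.inl ⟨_, hs⟩
        | esR _ _ hs =>
          exact Or.inr fun c => ⟨_, step_plug (LStep.esR c x hs) L⟩
      · exact Or.inr fun c => h' (Term.es c x u)

theorem habs_weaken : ∀ {A' t}, HAbs A' t → ∀ {x A}, A' = insert x A → x ∉ A →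
    x ∉ t.rv → HAbs A t := by
  intro A' t h
  induction h with
  | lam A x t => intro z B hEq hz hr; exact HAbs.lam _ _ _
  | var hy =>
    intro z B hEq hz hr
    subst hEq
    rcases Finset.mem_insert.1 hy with h | h
    · exact absurd (by simp [Term.rv, h]) hr
    · exact HAbs.var h
  | sub1 x u ht hx ih =>
    intro z B hEq hz hr
    subst hEq
    have hzx : x ≠ z := fun h => hx (h ▸ Finset.mem_insert_self z B)
    have hzr : z ∉ (Term.rv _ : Finset ℕ) := fun h => hr (by
      simp [Term.rv, Finset.mem_union, Finset.mem_erase]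
      exact Or.inl ⟨fun he => hzx he.symm, h⟩)
    exact HAbs.sub1 x u (ih rfl hz hzr) (fun h => hx (Finset.mem_insert_of_mem h))
  | sub2 ht hx hu iht ihu =>
    rename_i A t x u
    intro z B hEq hz hr
    subst hEq
    have hzx : x ≠ z := fun h => hx (h ▸ Finset.mem_insert_self z B)
    have hrt : z ∉ t.rv := fun h => hr (by
      simp [Term.rv, Finset.mem_union, Finset.mem_erase]
      exact Or.inl ⟨fun he => hzx he.symm, h⟩)
    have hru : z ∉ u.rv := fun h => hr (by
      simp [Term.rv, Finset.mem_union]; exact Or.inr h)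
    have h1 : HAbs (insert x B) t := by
      refine iht (by rw [Finset.insert_comm]) ?_ hrt
      simp [Finset.mem_insert]
      exact ⟨fun h => hzx h.symm, hz⟩
    exact HAbs.sub2 h1 (fun h => hx (Finset.mem_insert_of_mem h)) (ihu rfl hz hru)

theorem split_unfold_lam : ∀ {a : Term} {y s L}, split a = some (.lam y s, L) →
    ∀ σ, ∃ L', split (unfold σ a) = some (.lam y s, L') := by
  intro a
  induction a with
  | var x => intro y s L h σ; simp [split] at h
  | lam x t =>
    intro y s L h σ
    simp [split] at h
    exact ⟨[], by simp [unfold, split, h.1.1, h.1.2]⟩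
  | app t u _ _ => intro y s L h σ; simp [split] at h
  | es t x u iht _ =>
    intro y s L h σ
    simp only [split, Option.map_eq_some_iff] at h
    obtain ⟨⟨v', L'⟩, hp, he⟩ := h
    cases he
    cases hs : split (unfold σ u) with
    | none =>
      obtain ⟨L₁, h₁⟩ := iht hp σ
      exact ⟨L₁ ++ [(x, unfold σ u)], by simp [unfold, hs, split, h₁]⟩
    | some p =>
      cases p with
      | mk v₁ L₁ =>
        by_cases hx : x ∈ t.rv
        · obtain ⟨L₂, h₂⟩ := iht hp (Function.update σ x (some v₁))
          refine ⟨(L₂ ++ [(x, v₁)]) ++ L₁, ?_⟩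
          simp [unfold, hs, hx, split_plug, split, h₂]
        · obtain ⟨L₂, h₂⟩ := iht hp σ
          exact ⟨L₂ ++ [(x, unfold σ u)], by simp [unfold, hs, hx, split, h₂]⟩

theorem habs_split : ∀ {t : Term} {A}, HAbs A t → ∀ σ,
    (∀ x, x ∈ A → x ∈ t.rv → ∃ y s, σ x = some (Term.lam y s)) →
    ∃ y s L, split (unfold σ t) = some (.lam y s, L) := by
  intro t
  induction t with
  | var z =>
    intro A h σ hσ
    cases h with
    | var hz =>
      obtain ⟨y, s, hy⟩ := hσ z hz (by simp [Term.rv])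
      exact ⟨y, s, [], by simp [unfold, hy, split]⟩
  | lam z b => intro A h σ hσ; exact ⟨z, b, [], by simp [unfold, split]⟩
  | app t u _ _ => intro A h σ hσ; cases h
  | es t z u iht ihu =>
    intro A h σ hσ
    cases h with
    | sub1 _ _ ht hz =>
      cases hs : split (unfold σ u) with
      | none =>
        obtain ⟨y, s, L₁, h₁⟩ := iht ht σ (fun x hx hr => hσ x hx (by
          have : x ≠ z := fun he => hz (he ▸ hx)
          simp [Term.rv, Finset.mem_union, Finset.mem_erase, this, hr]))
        exact ⟨y, s, L₁ ++ [(z, unfold σ u)], by simp [unfold, hs, split, h₁]⟩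
      | some p =>
        cases p with
        | mk v₁ L₁ =>
          by_cases hz' : z ∈ t.rv
          · obtain ⟨y, s, L₂, h₂⟩ := iht ht (Function.update σ z (some v₁))
              (fun x hx hr => by
                have hne : x ≠ z := fun he => hz (he ▸ hx)
                rw [Function.update_of_ne hne]
                exact hσ x hx (by
                  simp [Term.rv, Finset.mem_union, Finset.mem_erase, hne, hr]))
            refine ⟨y, s, (L₂ ++ [(z, v₁)]) ++ L₁, ?_⟩
            simp [unfold, hs, hz', split_plug, split, h₂]
          · obtain ⟨y, s, L₂, h₂⟩ := iht ht σ (fun x hx hr => hσ x hx (by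
              have : x ≠ z := fun he => hz (he ▸ hx)
              simp [Term.rv, Finset.mem_union, Finset.mem_erase, this, hr]))
            exact ⟨y, s, L₂ ++ [(z, unfold σ u)], by
              simp [unfold, hs, hz', split, h₂]⟩
    | sub2 ht hz hu =>
      obtain ⟨y₀, s₀, L₀, hs⟩ := ihu hu σ (fun x hx hr => hσ x hx (by
        simp [Term.rv, Finset.mem_union]; exact Or.inr hr))
      by_cases hz' : z ∈ t.rv
      · obtain ⟨y, s, L₂, h₂⟩ := iht ht (Function.update σ z (some (.lam y₀ s₀)))
          (fun x hx hr => by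
            rcases Finset.mem_insert.1 hx with h | h
            · subst h; exact ⟨y₀, s₀, by simp⟩
            · have hne : x ≠ z := fun he => hz (he ▸ h)
              rw [Function.update_of_ne hne]
              exact hσ x h (by
                simp [Term.rv, Finset.mem_union, Finset.mem_erase, hne, hr]))
        refine ⟨y, s, (L₂ ++ [(z, .lam y₀ s₀)]) ++ L₀, ?_⟩
        simp [unfold, hs, hz', split_plug, split, h₂]
      · have ht' : HAbs _ t := habs_weaken ht rfl hz hz'
        obtain ⟨y, s, L₂, h₂⟩ := iht ht' σ (fun x hx hr => hσ x hx (by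
          have : x ≠ z := fun he => hz (he ▸ hx)
          simp [Term.rv, Finset.mem_union, Finset.mem_erase, this, hr]))
        exact ⟨y, s, L₂ ++ [(z, unfold σ u)], by simp [unfold, hs, hz', split, h₂]⟩

theorem rv_sub : ∀ {ρ A S μ t t'}, UStep ρ A S μ t t' →
    ∀ {x v}, ρ = .sub x v → x ∈ t.rv := by
  intro ρ A S μ t t' h
  induction h with
  | db _ _ _ _ => intro x v h; cases h
  | sub _ _ _ => intro x v h; cases h; simp [Term.rv]
  | lsv _ _ _ _ => intro x v h; cases h
  | appL _ _ ih =>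
    intro x v h; simp [Term.rv, Finset.mem_union]; exact Or.inl (ih h)
  | appR _ _ ih =>
    intro x v h; simp [Term.rv, Finset.mem_union]; exact Or.inr (ih h)
  | esR _ _ _ ih =>
    intro x v h; simp [Term.rv, Finset.mem_union]; exact Or.inr (ih h)
  | esLA h₁ hu hx hρ ih =>
    rename_i ρ A S μ t t' x u
    intro z w h
    subst h
    have hz := ih rfl
    have hne : x ≠ z := by
      intro he; subst he; exact hρ (by simp [Kind.fv])
    simp only [Term.rv, Finset.mem_union, Finset.mem_erase]
    exact Or.inl ⟨fun he => hne he.symm, hz⟩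
  | esLS h₁ hu hx hρ ih =>
    rename_i ρ A S μ t t' x u
    intro z w h
    subst h
    have hz := ih rfl
    have hne : x ≠ z := by
      intro he; subst he; exact hρ (by simp [Kind.fv])
    simp only [Term.rv, Finset.mem_union, Finset.mem_erase]
    exact Or.inl ⟨fun he => hne he.symm, hz⟩

theorem main : ∀ {ρ A S μ t t'}, UStep ρ A S μ t t' → ∀ σ,
    (∀ x, x ∈ A → x ∈ t.rv → ∃ y s, σ x = some (Term.lam y s)) →
    (∃ b, LStep .db (unfold σ t) b) ∨
      (μ = .ap ∧ ∃ y s L, split (unfold σ t) = some (.lam y s, L)) := by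
  intro ρ A S μ t t' h
  induction h with
  | db x t L u =>
    intro σ hσ
    have hsp : split (plug (Term.lam x t) L) = some (.lam x t, L) := by
      rw [split_plug]; simp [split]
    obtain ⟨L', hL'⟩ := split_unfold_lam hsp σ
    have he := split_eq_plug hL'
    refine Or.inl ⟨plug (.es t x (unfold σ u)) L', ?_⟩
    show LStep .db (.app (unfold σ (plug (Term.lam x t) L)) (unfold σ u)) _
    rw [he]
    exact LStep.db x t L' (unfold σ u)
  | sub hx hv hfv =>
    rename_i A S x v
    intro σ hσ
    obtain ⟨y, s, hy⟩ := hσ x hx (by simp [Term.rv])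
    exact Or.inr ⟨rfl, y, s, [], by simp [unfold, hy, split]⟩
  | lsv L h₁ hx ha ih =>
    rename_i A S μ t t' x v
    intro σ hσ
    obtain ⟨y₀, s₀, L₀, hsplit⟩ := habs_split ha σ (fun z hz hr => hσ z hz (by
      simp [Term.rv, Finset.mem_union]; exact Or.inr hr))
    have hrv : x ∈ t.rv := rv_sub h₁ rfl
    have hxA : x ∉ A := fun h => hx (Finset.mem_union_left _ h)
    have hun : unfold σ (.es t x (plug v L)) =
        plug (.es (unfold (Function.update σ x (some (.lam y₀ s₀))) t) x
          (.lam y₀ s₀)) L₀ := by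
      simp [unfold, hsplit, hrv]
    rcases ih (Function.update σ x (some (.lam y₀ s₀))) (fun z hz hr => by
      rcases Finset.mem_insert.1 hz with h | h
      · subst h; exact ⟨y₀, s₀, by simp⟩
      · have hne : z ≠ x := fun he => hxA (he ▸ h)
        rw [Function.update_of_ne hne]
        exact hσ z h (by
          simp only [Term.rv, Finset.mem_union, Finset.mem_erase]
          exact Or.inl ⟨hne, hr⟩)) with hl | hr'
    · obtain ⟨b, hb⟩ := hl
      exact Or.inl ⟨_, hun ▸ step_plug (LStep.esL (ρ := .db) x _ (Finset.notMem_empty x) hb) L₀⟩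
    · obtain ⟨hμ, y, s, L₁, hsp⟩ := hr'
      refine Or.inr ⟨hμ, y, s, (L₁ ++ [(x, .lam y₀ s₀)]) ++ L₀, ?_⟩
      rw [hun, split_plug]
      simp [split, hsp]
  | appL u h₁ ih =>
    rename_i ρ A S μ t t'
    intro σ hσ
    rcases ih σ (fun z hz hr => hσ z hz (by
        simp [Term.rv, Finset.mem_union]; exact Or.inl hr)) with hl | hr'
    · obtain ⟨b, hb⟩ := hl
      exact Or.inl ⟨_, LStep.appL _ hb⟩
    · obtain ⟨_, y, s, L₁, hsp⟩ := hr'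
      have he := split_eq_plug hsp
      refine Or.inl ⟨plug (.es s y (unfold σ u)) L₁, ?_⟩
      show LStep .db (.app (unfold σ t) (unfold σ u)) _
      rw [he]
      exact LStep.db y s L₁ _
  | appR hst h₁ ih =>
    rename_i ρ A S μ t u u'
    intro σ hσ
    rcases ih σ (fun z hz hr => hσ z hz (by
        simp [Term.rv, Finset.mem_union]; exact Or.inr hr)) with hl | hr'
    · obtain ⟨b, hb⟩ := hl
      exact Or.inl ⟨_, LStep.appR _ hb⟩
    · exact absurd hr'.1 (by decide)
  | esR t x h₁ ih =>
    rename_i ρ A S μ u u'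
    intro σ hσ
    rcases ih σ (fun z hz hr => hσ z hz (by
        simp [Term.rv, Finset.mem_union]; exact Or.inr hr)) with hl | hr'
    · obtain ⟨b, hb⟩ := hl
      cases hs : split (unfold σ u) with
      | none =>
        have hun : unfold σ (.es t x u) = .es (unfold σ t) x (unfold σ u) := by
          simp [unfold, hs]
        exact Or.inl ⟨_, hun ▸ LStep.esR (unfold σ t) x hb⟩
      | some p =>
        obtain ⟨v₁, L₁⟩ := p
        by_cases hx : x ∈ t.rv
        · have hun : unfold σ (.es t x u) =
              plug (.es (unfold (Function.update σ x (some v₁)) t) x v₁) L₁ := by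
            simp [unfold, hs, hx]
          have hequ : unfold σ u = plug v₁ L₁ := split_eq_plug hs
          rw [hequ] at hb
          rcases plug_decomp hb with h' | h'
          · obtain ⟨b', hb'⟩ := h'
            exact (value_no_db (split_value hs) hb').elim
          · obtain ⟨w', hw'⟩ := h' (.es (unfold (Function.update σ x (some v₁)) t) x v₁)
            exact Or.inl ⟨w', hun ▸ hw'⟩
        · have hun : unfold σ (.es t x u) = .es (unfold σ t) x (unfold σ u) := by
            simp [unfold, hs, hx]
          exact Or.inl ⟨_, hun ▸ LStep.esR (unfold σ t) x hb⟩
    · exact absurd hr'.1 (by decide)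
  | esLA h₁ hu hx hρ ih =>
    rename_i ρ A S μ t t' x u
    intro σ hσ
    have hxA : x ∉ A := fun h => hx (Finset.mem_union_left _ h)
    obtain ⟨y₀, s₀, L₀, hs⟩ := habs_split hu σ (fun z hz hr => hσ z hz (by
      simp [Term.rv, Finset.mem_union]; exact Or.inr hr))
    by_cases hrv : x ∈ t.rv
    · have hun : unfold σ (.es t x u) =
          plug (.es (unfold (Function.update σ x (some (.lam y₀ s₀))) t) x
            (.lam y₀ s₀)) L₀ := by
        simp [unfold, hs, hrv]
      rcases ih (Function.update σ x (some (.lam y₀ s₀))) (fun z hz hr => by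
        rcases Finset.mem_insert.1 hz with h | h
        · subst h; exact ⟨y₀, s₀, by simp⟩
        · have hne : z ≠ x := fun he => hxA (he ▸ h)
          rw [Function.update_of_ne hne]
          exact hσ z h (by
            simp only [Term.rv, Finset.mem_union, Finset.mem_erase]
            exact Or.inl ⟨hne, hr⟩)) with hl | hr'
      · obtain ⟨b, hb⟩ := hl
        exact Or.inl ⟨_, hun ▸ step_plug (LStep.esL (ρ := .db) x _ (Finset.notMem_empty x) hb) L₀⟩
      · obtain ⟨hμ, y, s, L₁, hsp⟩ := hr'
        refine Or.inr ⟨hμ, y, s, (L₁ ++ [(x, .lam y₀ s₀)]) ++ L₀, ?_⟩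
        rw [hun, split_plug]
        simp [split, hsp]
    · have hun : unfold σ (.es t x u) = .es (unfold σ t) x (unfold σ u) := by
        simp [unfold, hs, hrv]
      rcases ih σ (fun z hz hr => by
        rcases Finset.mem_insert.1 hz with h | h
        · exact absurd (h ▸ hr) hrv
        · have hne : z ≠ x := fun he => hxA (he ▸ h)
          exact hσ z h (by
            simp only [Term.rv, Finset.mem_union, Finset.mem_erase]
            exact Or.inl ⟨hne, hr⟩)) with hl | hr'
      · obtain ⟨b, hb⟩ := hl
        exact Or.inl ⟨_, hun ▸ LStep.esL (ρ := .db) x _ (Finset.notMem_empty x) hb⟩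
      · obtain ⟨hμ, y, s, L₁, hsp⟩ := hr'
        refine Or.inr ⟨hμ, y, s, L₁ ++ [(x, unfold σ u)], ?_⟩
        rw [hun]
        simp [split, hsp]
  | esLS h₁ hu hx hρ ih =>
    rename_i ρ A S μ t t' x u
    intro σ hσ
    have hxA : x ∉ A := fun h => hx (Finset.mem_union_left _ h)
    have hgood : ∀ σ₀ : ℕ → Option Term, (∀ z, z ≠ x → σ₀ z = σ z) →
        ∀ z, z ∈ A → z ∈ t.rv → ∃ y s, σ₀ z = some (Term.lam y s) := by
      intro σ₀ hσ₀ z hz hr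
      have hne : z ≠ x := fun he => hxA (he ▸ hz)
      rw [hσ₀ z hne]
      exact hσ z hz (by
        simp only [Term.rv, Finset.mem_union, Finset.mem_erase]
        exact Or.inl ⟨hne, hr⟩)
    cases hs : split (unfold σ u) with
    | none =>
      have hun : unfold σ (.es t x u) = .es (unfold σ t) x (unfold σ u) := by
        simp [unfold, hs]
      rcases ih σ (hgood σ (fun _ _ => rfl)) with hl | hr'
      · obtain ⟨b, hb⟩ := hl
        exact Or.inl ⟨_, hun ▸ LStep.esL (ρ := .db) x _ (Finset.notMem_empty x) hb⟩
      · obtain ⟨hμ, y, s, L₁, hsp⟩ := hr'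
        refine Or.inr ⟨hμ, y, s, L₁ ++ [(x, unfold σ u)], ?_⟩
        rw [hun]; simp [split, hsp]
    | some p =>
      obtain ⟨v₁, L₁⟩ := p
      by_cases hrv : x ∈ t.rv
      · have hun : unfold σ (.es t x u) =
            plug (.es (unfold (Function.update σ x (some v₁)) t) x v₁) L₁ := by
          simp [unfold, hs, hrv]
        rcases ih (Function.update σ x (some v₁))
            (hgood _ (fun z hne => Function.update_of_ne hne _ _)) with hl | hr'
        · obtain ⟨b, hb⟩ := hl
          exact Or.inl ⟨_, hun ▸ step_plug (LStep.esL (ρ := .db) x _ (Finset.notMem_empty x) hb) L₁⟩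
        · obtain ⟨hμ, y, s, L₂, hsp⟩ := hr'
          refine Or.inr ⟨hμ, y, s, (L₂ ++ [(x, v₁)]) ++ L₁, ?_⟩
          rw [hun, split_plug]; simp [split, hsp]
      · have hun : unfold σ (.es t x u) = .es (unfold σ t) x (unfold σ u) := by
          simp [unfold, hs, hrv]
        rcases ih σ (hgood σ (fun _ _ => rfl)) with hl | hr'
        · obtain ⟨b, hb⟩ := hl
          exact Or.inl ⟨_, hun ▸ LStep.esL (ρ := .db) x _ (Finset.notMem_empty x) hb⟩
        · obtain ⟨hμ, y, s, L₂, hsp⟩ := hr'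
          refine Or.inr ⟨hμ, y, s, L₂ ++ [(x, unfold σ u)], ?_⟩
          rw [hun]; simp [split, hsp]

end Aux

/-- if `t →S_top t'` with `S = fv(t)`, then the partial unfolding
`·*(t)` of `t` under the empty value assignment has a db-redex in lcbv. -/
theorem unfold_of_UTop_reducible {t t' : Term}
    (hstep : UTop t.fv t t') :
    ∃ t'', LStep .db (unfold₀ t) t'' := by
  have hemp : ∀ x : ℕ, x ∈ (∅ : Finset ℕ) → x ∈ t.rv →
      ∃ y s, (fun _ => (none : Option Term)) x = some (Term.lam y s) :=
    fun x hx _ => absurd hx (Finset.notMem_empty x)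
  rcases hstep with h | h <;>
  · rcases Aux.main h _ hemp with hl | hr
    · exact hl
    · exact absurd hr.1 (by decide)
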